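/- There exists a constant C > 0 such that for every twice continuously differentiable function f : ℝ → ℝ that is 2π-periodic, one has ‖f'‖_{L⁴(Ω)} ≤ C ‖f − f̄‖_{L^∞(Ω)}^{1/2} ‖f''‖_{L²(Ω)}^{1/2}, where Ω = [−π, π] and f̄ := (1/(2π)) ∫_Ω f(x) dx denotes the mean value of f over one period. -/

import Mathlib

open MeasureTheory Real Set

/-- The `L²` norm of `f` over one period `Ω = [-π, π]`. -/
noncomputable def L2Norm (f : ℝ → ℝ) : ℝ := (∫ x in (-π)..π, (f x) ^ 2) ^ ((1 : ℝ) / 2)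

/-- The `L⁴` norm of `f` over one period `Ω = [-π, π]`. -/
noncomputable def L4Norm (f : ℝ → ℝ) : ℝ := (∫ x in (-π)..π, |f x| ^ 4) ^ ((1 : ℝ) / 4)

/-- The supremum of `|f|` over one period `Ω = [-π, π]`. -/
noncomputable def supNorm (f : ℝ → ℝ) : ℝ := sSup ((fun x => |f x|) '' Icc (-π) π)

/-- The mean value of `f` over one period `Ω = [-π, π]`. -/
noncomputable def meanValue (f : ℝ → ℝ) : ℝ := (1 / (2 * π)) * ∫ x in (-π)..π, f x

/-- A continuous function is in `L²` of the restricted measure on `Ioc (-π) π`. -/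
lemma memL2_of_continuous {h : ℝ → ℝ} (hc : Continuous h) :
    MemLp h (ENNReal.ofReal 2) (volume.restrict (Ioc (-π) π)) := by
  haveI : IsFiniteMeasure (volume.restrict (Ioc (-π) π)) := by
    constructor
    rw [Measure.restrict_apply_univ, Real.volume_Ioc]
    exact ENNReal.ofReal_lt_top
  obtain ⟨C, hC⟩ := isCompact_Icc.exists_bound_of_continuousOn
    (s := Icc (-π) π) hc.continuousOn
  have htop : MemLp h ⊤ (volume.restrict (Ioc (-π) π)) := by
    refine memLp_top_of_bound hc.aestronglyMeasurable C ?_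
    refine (ae_restrict_iff' measurableSet_Ioc).mpr (ae_of_all _ fun x hx => ?_)
    exact hC x (Ioc_subset_Icc_self hx)
  exact htop.mono_exponent le_top

set_option maxHeartbeats 1000000 in
theorem interp_L4_deriv_mean :
    ∃ C : ℝ, 0 < C ∧ ∀ f : ℝ → ℝ, ContDiff ℝ 2 f → Function.Periodic f (2 * π) →
      L4Norm (deriv f) ≤ C * (supNorm (fun x => f x - meanValue f)) ^ ((1 : ℝ) / 2)
        * (L2Norm (deriv (deriv f))) ^ ((1 : ℝ) / 2) := by
  refine ⟨Real.sqrt 3, Real.sqrt_pos.mpr (by norm_num), ?_⟩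
  intro f hf hp
  have hπ : (0 : ℝ) < π := Real.pi_pos
  have hab : (-π : ℝ) ≤ π := by linarith
  set m := meanValue f with hm
  set g : ℝ → ℝ := fun x => f x - m with hgdef
  have hfd : Differentiable ℝ f := hf.differentiable (by norm_num)
  have hf1 : ContDiff ℝ 1 (deriv f) := by
    have h2 : ContDiff ℝ ((1 : ℕ) + 1) f := by exact_mod_cast hf
    exact (contDiff_succ_iff_deriv.mp h2).2.2
  have hd' : Differentiable ℝ (deriv f) := hf1.differentiable (by norm_num)
  have hc' : Continuous (deriv f) := hd'.continuous
  have hc'' : Continuous (deriv (deriv f)) := (contDiff_one_iff_deriv.mp hf1).2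
  -- periodicity at the endpoints
  have hfp : f π = f (-π) := by
    have := hp (-π); rw [show -π + 2 * π = π by ring] at this; exact this
  have hfp' : deriv f π = deriv f (-π) := by
    have hfun : (fun y => f (y + 2 * π)) = f := funext hp
    have h := deriv_comp_add_const (f := f) (a := 2 * π) (x := -π)
    rw [hfun, show -π + 2 * π = π by ring] at h
    exact h.symm
  -- sup norm facts
  have hgc : Continuous g := hf.continuous.sub continuous_const
  set M := supNorm g with hMdef
  have hbdd : BddAbove ((fun x => |g x|) '' Icc (-π) π) :=
    (isCompact_Icc.image hgc.abs).bddAbove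
  have hle : ∀ x ∈ Icc (-π) π, |g x| ≤ M := fun x hx => le_csSup hbdd ⟨x, hx, rfl⟩
  have hM0 : 0 ≤ M := le_trans (abs_nonneg _) (hle π ⟨hab, le_rfl⟩)
  -- the two main integrals
  set A := ∫ x in (-π)..π, (deriv f x) ^ 4 with hAdef
  set B := ∫ x in (-π)..π, (deriv (deriv f) x) ^ 2 with hBdef
  have hA0 : 0 ≤ A :=
    intervalIntegral.integral_nonneg hab fun x _ => by positivity
  have hB0 : 0 ≤ B :=
    intervalIntegral.integral_nonneg hab fun x _ => by positivity
  -- integrability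
  have hi1 : IntervalIntegrable (fun x => deriv f x * (deriv f x) ^ 3) volume (-π) π :=
    (hc'.mul (hc'.pow 3)).intervalIntegrable _ _
  have hi2 : IntervalIntegrable
      (fun x => g x * (3 * (deriv f x) ^ 2 * deriv (deriv f) x)) volume (-π) π :=
    (hgc.mul ((continuous_const.mul (hc'.pow 2)).mul hc'')).intervalIntegrable _ _
  -- integration by parts
  have hibp : (∫ x in (-π)..π,
      (deriv f x * (deriv f x) ^ 3 + g x * (3 * (deriv f x) ^ 2 * deriv (deriv f) x)))
      = g π * (deriv f π) ^ 3 - g (-π) * (deriv f (-π)) ^ 3 := by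
    apply intervalIntegral.integral_deriv_mul_eq_sub_of_hasDerivAt
      (u := g) (v := fun y => (deriv f y) ^ 3) (u' := deriv f)
      (v' := fun x => 3 * (deriv f x) ^ 2 * deriv (deriv f) x)
      (hgc.continuousOn) ((hc'.pow 3).continuousOn)
      (fun x _ => ((hfd x).hasDerivAt).sub_const m)
      (fun x _ => by
        have h := ((hd' x).hasDerivAt).pow 3
        norm_num at h
        exact h)
      (hc'.intervalIntegrable _ _)
      (((continuous_const.mul (hc'.pow 2)).mul hc'').intervalIntegrable _ _)
  have hbound : g π * (deriv f π) ^ 3 - g (-π) * (deriv f (-π)) ^ 3 = 0 := by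
    have : g π = g (-π) := by simp [hgdef, hfp]
    rw [this, hfp']
    ring
  have hsplit : A + (∫ x in (-π)..π, g x * (3 * (deriv f x) ^ 2 * deriv (deriv f) x)) = 0 := by
    have hsum := intervalIntegral.integral_add hi1 hi2
    have hA' : (∫ x in (-π)..π, deriv f x * (deriv f x) ^ 3) = A := by
      rw [hAdef]
      exact intervalIntegral.integral_congr fun x _ => by ring
    rw [hibp, hbound] at hsum
    rw [← hA', ← hsum]
  have key : A = -∫ x in (-π)..π, g x * (3 * (deriv f x) ^ 2 * deriv (deriv f) x) := by
    linarith
  -- step 1 : A ≤ 3 M ∫ (f')² |f''|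
  set J := ∫ x in (-π)..π, (deriv f x) ^ 2 * |deriv (deriv f) x| with hJdef
  have hstep1 : A ≤ 3 * M * J := by
    rw [key]
    have hiabs : IntervalIntegrable
        (fun x => |g x * (3 * (deriv f x) ^ 2 * deriv (deriv f) x)|) volume (-π) π :=
      ((hgc.mul ((continuous_const.mul (hc'.pow 2)).mul hc'')).abs).intervalIntegrable _ _
    have himaj : IntervalIntegrable
        (fun x => 3 * M * ((deriv f x) ^ 2 * |deriv (deriv f) x|)) volume (-π) π :=
      (continuous_const.mul ((hc'.pow 2).mul hc''.abs)).intervalIntegrable _ _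
    calc (-∫ x in (-π)..π, g x * (3 * (deriv f x) ^ 2 * deriv (deriv f) x))
        ≤ |∫ x in (-π)..π, g x * (3 * (deriv f x) ^ 2 * deriv (deriv f) x)| := neg_le_abs _
      _ ≤ ∫ x in (-π)..π, |g x * (3 * (deriv f x) ^ 2 * deriv (deriv f) x)| :=
          intervalIntegral.abs_integral_le_integral_abs hab
      _ ≤ ∫ x in (-π)..π, 3 * M * ((deriv f x) ^ 2 * |deriv (deriv f) x|) := by
          apply intervalIntegral.integral_mono_on hab hiabs himaj
          intro x hx
          have h1 : |g x| ≤ M := hle x hx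
          have h2 : |g x * (3 * (deriv f x) ^ 2 * deriv (deriv f) x)|
              = |g x| * (3 * ((deriv f x) ^ 2 * |deriv (deriv f) x|)) := by
            rw [abs_mul, abs_mul, abs_mul]
            have : |(3 : ℝ)| = 3 := by norm_num
            rw [this, abs_pow, sq_abs]
            ring
          rw [h2]
          calc |g x| * (3 * ((deriv f x) ^ 2 * |deriv (deriv f) x|))
              ≤ M * (3 * ((deriv f x) ^ 2 * |deriv (deriv f) x|)) := by
                apply mul_le_mul_of_nonneg_right h1
                positivity
            _ = 3 * M * ((deriv f x) ^ 2 * |deriv (deriv f) x|) := by ring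
      _ = 3 * M * J := by
          rw [hJdef, ← intervalIntegral.integral_const_mul]
  -- step 2 : Cauchy–Schwarz : J ≤ √A √B
  have hstep2 : J ≤ Real.sqrt A * Real.sqrt B := by
    have hpq : Real.HolderConjugate 2 2 := Real.holderConjugate_iff.mpr ⟨by norm_num, by norm_num⟩
    have hFnn : 0 ≤ᵐ[volume.restrict (Ioc (-π) π)] fun x => (deriv f x) ^ 2 :=
      ae_of_all _ fun x => by positivity
    have hGnn : 0 ≤ᵐ[volume.restrict (Ioc (-π) π)] fun x => |deriv (deriv f) x| :=
      ae_of_all _ fun x => abs_nonneg _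
    have hF : MemLp (fun x => (deriv f x) ^ 2) (ENNReal.ofReal 2)
        (volume.restrict (Ioc (-π) π)) := memL2_of_continuous (hc'.pow 2)
    have hG : MemLp (fun x => |deriv (deriv f) x|) (ENNReal.ofReal 2)
        (volume.restrict (Ioc (-π) π)) := memL2_of_continuous hc''.abs
    have h := MeasureTheory.integral_mul_le_Lp_mul_Lq_of_nonneg hpq hFnn hGnn hF hG
    have e1 : (∫ x in Ioc (-π) π, ((deriv f x) ^ 2) ^ (2 : ℝ)) = A := by
      rw [hAdef, intervalIntegral.integral_of_le hab]
      exact setIntegral_congr_fun measurableSet_Ioc fun x _ => by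
        rw [show ((2:ℝ)) = ((2:ℕ):ℝ) by norm_num, Real.rpow_natCast]; ring
    have e2 : (∫ x in Ioc (-π) π, (|deriv (deriv f) x|) ^ (2 : ℝ)) = B := by
      rw [hBdef, intervalIntegral.integral_of_le hab]
      exact setIntegral_congr_fun measurableSet_Ioc fun x _ => by
        rw [show ((2:ℝ)) = ((2:ℕ):ℝ) by norm_num, Real.rpow_natCast, sq_abs]
    rw [e1, e2] at h
    have e3 : J = ∫ x in Ioc (-π) π, (deriv f x) ^ 2 * |deriv (deriv f) x| := by
      rw [hJdef, intervalIntegral.integral_of_le hab]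
    rw [e3]
    calc (∫ x in Ioc (-π) π, (deriv f x) ^ 2 * |deriv (deriv f) x|)
        ≤ A ^ ((1:ℝ)/2) * B ^ ((1:ℝ)/2) := h
      _ = Real.sqrt A * Real.sqrt B := by
          rw [← Real.sqrt_eq_rpow, ← Real.sqrt_eq_rpow]
  -- combine : A ≤ 3 M √A √B
  have hmain : A ≤ 3 * M * (Real.sqrt A * Real.sqrt B) :=
    le_trans hstep1 (by
      apply mul_le_mul_of_nonneg_left hstep2
      positivity)
  -- rewrite the goal
  have hL4 : L4Norm (deriv f) = A ^ ((1:ℝ)/4) := by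
    rw [L4Norm, hAdef]
    congr 1
    exact intervalIntegral.integral_congr fun x _ => by
      rw [← abs_pow, abs_of_nonneg (by positivity : (0:ℝ) ≤ (deriv f x) ^ 4)]
  have hL2 : L2Norm (deriv (deriv f)) = Real.sqrt B := by
    rw [L2Norm, hBdef, Real.sqrt_eq_rpow]
  rw [hL4, hL2]
  have hgoal : A ^ ((1:ℝ)/4) = Real.sqrt (Real.sqrt A) := by
    rw [show ((1:ℝ)/4) = (1/2) * (1/2) by norm_num, Real.rpow_mul hA0,
      ← Real.sqrt_eq_rpow, ← Real.sqrt_eq_rpow]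
  rw [hgoal, ← Real.sqrt_eq_rpow, ← Real.sqrt_eq_rpow]
  -- final algebra : √√A ≤ √3 √M √√B
  have hsA : Real.sqrt A ≤ 3 * M * Real.sqrt B := by
    rcases eq_or_lt_of_le (Real.sqrt_nonneg A) with h0 | h0
    · rw [← h0]; positivity
    · have hAA : Real.sqrt A * Real.sqrt A = A := Real.mul_self_sqrt hA0
      have : Real.sqrt A * Real.sqrt A ≤ (3 * M * Real.sqrt B) * Real.sqrt A := by
        rw [hAA]; nlinarith [hmain]
      exact le_of_mul_le_mul_right (by linarith [this]) h0
  calc Real.sqrt (Real.sqrt A) ≤ Real.sqrt (3 * M * Real.sqrt B) :=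
        Real.sqrt_le_sqrt hsA
    _ = Real.sqrt 3 * Real.sqrt M * Real.sqrt (Real.sqrt B) := by
        rw [Real.sqrt_mul (by positivity), Real.sqrt_mul (by norm_num)]
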